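/- arXiv:2205.04862 — 4 statements merged into one kernel-verified Lean document; each statement's English description precedes it below -/
import Mathlib

section
/- Let X be a real Hilbert space, F : X → ℝ twice continuously differentiable, z, x̂ ∈ X, L > 0 and γ ≥ 0. Suppose γ·Id ≤ ∇²F(ζ) ≤ L·Id for all ζ on the segment [x̂, z] = {x̂ + s(z − x̂) : s ∈ [0,1]}. Then for all β ∈ (0,1] and all x ∈ X: ⟨∇F(z) − ∇F(x̂), x − x̂⟩ ≥ γ(1 − β)‖x − x̂‖² − (L/(4β))‖x − z‖². -/
open RealInnerProductSpace

/-!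
Along the segment, the mean value theorem writes `⟪∇F(z) - ∇F(x̂), x - x̂⟫` as `⟪K (z - x̂), x - x̂⟫`
for a Hessian `K = ∇²F(ζ)`. Splitting `z - x̂ = (x - x̂) - (x - z)`, the cross term
`⟪K (x - z), x - x̂⟫` is bounded by Young's inequality for the positive semidefinite symmetric
form of `K`, and the bounds `γ ≤ K ≤ L` finish the estimate.
-/

theorem LinearMap.isSymmetric_of_hasGradientAt_of_hasFDerivAt {X : Type*}
    [NormedAddCommGroup X] [InnerProductSpace ℝ X] [CompleteSpace X]
    {F : X → ℝ} {g : X → X} {H : X → X →L[ℝ] X}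
    (hg : ∀ ζ, HasGradientAt F (g ζ) ζ) (hH : ∀ ζ, HasFDerivAt g (H ζ) ζ) (ζ : X) :
    (H ζ : X →ₗ[ℝ] X).IsSymmetric := by
  let T : X →L[ℝ] StrongDual ℝ X :=
    (InnerProductSpace.toDual ℝ X).toLinearIsometry.toContinuousLinearMap
  intro v w
  rw [ContinuousLinearMap.coe_coe, real_inner_comm (H ζ w)]
  exact second_derivative_symmetric (fun y => (hg y).hasFDerivAt)
    (T.hasFDerivAt.comp ζ (hH ζ)) v w

theorem exists_mem_segment_inner_sub_eq {X : Type*}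
    [NormedAddCommGroup X] [InnerProductSpace ℝ X] {g : X → X} {H : X → X →L[ℝ] X}
    (hH : ∀ ζ, HasFDerivAt g (H ζ) ζ) (a b v : X) :
    ∃ ζ ∈ segment ℝ a b, ⟪g b - g a, v⟫ = ⟪H ζ (b - a), v⟫ := by
  have hderiv (ζ : X) : HasFDerivWithinAt (innerSL ℝ v ∘ g) ((innerSL ℝ v).comp (H ζ)) .univ ζ :=
    ((innerSL ℝ v).hasFDerivAt.comp ζ (hH ζ)).hasFDerivWithinAt
  obtain ⟨ζ, hζ, hmvt⟩ := domain_mvt (fun ζ _ => hderiv ζ) convex_univ trivial trivial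
  refine ⟨ζ, hζ, ?_⟩
  simpa only [Function.comp_apply, ContinuousLinearMap.comp_apply, innerSL_apply_apply,
    ← inner_sub_right, real_inner_comm v] using hmvt

namespace LinearMap.IsSymmetric

variable {X : Type*} [NormedAddCommGroup X] [InnerProductSpace ℝ X] {K : X →ₗ[ℝ] X}

theorem inner_map_le_young (hK : K.IsSymmetric) (hpos : ∀ w, 0 ≤ ⟪K w, w⟫) {β : ℝ}
    (hβ : 0 < β) (a b : X) :
    ⟪K a, b⟫ ≤ β * ⟪K b, b⟫ + ⟪K a, a⟫ / (4 * β) := by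
  -- `0 ≤ ⟪K w, w⟫` for `w = 2β b - a`, divided by `4β`
  have hsq := hpos ((2 * β) • b - a)
  simp only [map_sub, map_smul, inner_sub_left, inner_sub_right, real_inner_smul_left,
    real_inner_smul_right] at hsq
  rw [hK b a, real_inner_comm (K a) b] at hsq
  field_simp
  linarith

theorem three_point_inner_le {γ L β : ℝ} (hK : K.IsSymmetric) (hγ : 0 ≤ γ)
    (hlow : ∀ h, γ * ‖h‖ ^ 2 ≤ ⟪K h, h⟫) (hup : ∀ h, ⟪K h, h⟫ ≤ L * ‖h‖ ^ 2)
    (hβ0 : 0 < β) (hβ1 : β ≤ 1) (a b : X) :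
    γ * (1 - β) * ‖b‖ ^ 2 - L / (4 * β) * ‖a‖ ^ 2 ≤ ⟪K (b - a), b⟫ := by
  have hpos (w : X) : 0 ≤ ⟪K w, w⟫ := (by positivity : 0 ≤ γ * ‖w‖ ^ 2).trans (hlow w)
  calc γ * (1 - β) * ‖b‖ ^ 2 - L / (4 * β) * ‖a‖ ^ 2
      = (1 - β) * (γ * ‖b‖ ^ 2) - L * ‖a‖ ^ 2 / (4 * β) := by ring
    _ ≤ (1 - β) * ⟪K b, b⟫ - ⟪K a, a⟫ / (4 * β) := by
      gcongr
      · exact hlow b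
      · exact hup a
    _ ≤ ⟪K b, b⟫ - ⟪K a, b⟫ := by linarith [hK.inner_map_le_young hpos hβ0 a b]
    _ = ⟪K (b - a), b⟫ := by rw [map_sub, inner_sub_left]

end LinearMap.IsSymmetric

theorem three_point_monotonicity_general {X : Type*} [NormedAddCommGroup X] [InnerProductSpace ℝ X]
    [CompleteSpace X]
    (F : X → ℝ) (g : X → X) (H : X → X →L[ℝ] X)
    (hg : ∀ ζ : X, HasGradientAt F (g ζ) ζ)
    (hH : ∀ ζ : X, HasFDerivAt g (H ζ) ζ)
    (z xs : X) (L γ : ℝ) (hγ : 0 ≤ γ)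
    (hbound : ∀ ζ ∈ segment ℝ xs z, ∀ h : X,
        γ * ‖h‖ ^ 2 ≤ ⟪H ζ h, h⟫ ∧ ⟪H ζ h, h⟫ ≤ L * ‖h‖ ^ 2)
    (β : ℝ) (hβ0 : 0 < β) (hβ1 : β ≤ 1) (x : X) :
    γ * (1 - β) * ‖x - xs‖ ^ 2 - L / (4 * β) * ‖x - z‖ ^ 2 ≤ ⟪g z - g xs, x - xs⟫ := by
  obtain ⟨ζ, hζ, hmvt⟩ := exists_mem_segment_inner_sub_eq hH xs z (x - xs)
  have hsplit : z - xs = (x - xs) - (x - z) := by abel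
  rw [hmvt, hsplit]
  exact (LinearMap.isSymmetric_of_hasGradientAt_of_hasFDerivAt hg hH ζ).three_point_inner_le hγ
    (fun h => (hbound ζ hζ h).1) (fun h => (hbound ζ hζ h).2) hβ0 hβ1 (x - z) (x - xs)

/-- Three-point monotonicity estimate under Hessian bounds on a segment. -/
theorem three_point_monotonicity {X : Type*} [NormedAddCommGroup X] [InnerProductSpace ℝ X]
    [CompleteSpace X]
    (F : X → ℝ) (g : X → X) (H : X → X →L[ℝ] X)
    (hF : ContDiff ℝ 2 F)
    (hg : ∀ ζ : X, HasGradientAt F (g ζ) ζ)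
    (hH : ∀ ζ : X, HasFDerivAt g (H ζ) ζ)
    (z xs : X) (L γ : ℝ) (hL : 0 < L) (hγ : 0 ≤ γ)
    (hbound : ∀ ζ ∈ segment ℝ xs z, ∀ h : X,
        γ * ‖h‖ ^ 2 ≤ ⟪H ζ h, h⟫ ∧ ⟪H ζ h, h⟫ ≤ L * ‖h‖ ^ 2)
    (β : ℝ) (hβ0 : 0 < β) (hβ1 : β ≤ 1) (x : X) :
    γ * (1 - β) * ‖x - xs‖ ^ 2 - L / (4 * β) * ‖x - z‖ ^ 2 ≤ ⟪g z - g xs, x - xs⟫ :=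
  three_point_monotonicity_general F g H hg hH z xs L γ hγ hbound β hβ0 hβ1 x
end

section
/- Let U, 𝒜 be Hilbert spaces (𝒜 separable), and let F be such that for fixed (u, α) the Hessian A := ∇²_u F(u;α) ∈ L(U;U) is self-adjoint with γ_F·Id ≤ A ≤ L_F·Id for some 0 < γ_F ≤ L_F. Let p₁, p₂, p̃ ∈ L(U;𝒜) (with finite |||·|||-norm) satisfy p̃A + B = 0 where B := ∇_{αu}F(u;α). Then ⟨p₁A + B, p₂ − p̃⟩* ≥ (γ_F/2)|||p₂ − p̃|||² + (γ_F/2)|||p₁ − p̃|||² − (L_F/2)|||p₂ − p₁|||², where ⟨·,·⟩* and |||·||| are the inner product and norm defined via an orthonormal basis {φᵢ} of 𝒜 by ⟨q₁,q₂⟩* = Σᵢ⟨q₁*φᵢ, q₂*φᵢ⟩. -/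
set_option maxHeartbeats 1000000
open RealInnerProductSpace ContinuousLinearMap

/-- Monotonicity estimate for the adjoint equation residual. -/
theorem adjoint_monotonicity {U 𝒜 : Type*}
    [NormedAddCommGroup U] [InnerProductSpace ℝ U] [CompleteSpace U]
    [NormedAddCommGroup 𝒜] [InnerProductSpace ℝ 𝒜] [CompleteSpace 𝒜]
    {ι : Type*} [Countable ι] (φ : HilbertBasis ι ℝ 𝒜)
    (γ L : ℝ) (hγ : 0 < γ) (hγL : γ ≤ L)
    (A : U →L[ℝ] U) (hA : IsSelfAdjoint A)
    (hlow : ∀ h : U, γ * ‖h‖ ^ 2 ≤ ⟪A h, h⟫)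
    (hup : ∀ h : U, ⟪A h, h⟫ ≤ L * ‖h‖ ^ 2)
    (p₁ p₂ ps B : U →L[ℝ] 𝒜)
    (hs1 : Summable fun i => ‖(adjoint p₁) (φ i)‖ ^ 2)
    (hs2 : Summable fun i => ‖(adjoint p₂) (φ i)‖ ^ 2)
    (hs3 : Summable fun i => ‖(adjoint ps) (φ i)‖ ^ 2)
    (heq : ps.comp A + B = 0) :
    γ / 2 * ∑' i, ‖(adjoint (p₂ - ps)) (φ i)‖ ^ 2
      + γ / 2 * ∑' i, ‖(adjoint (p₁ - ps)) (φ i)‖ ^ 2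
      - L / 2 * ∑' i, ‖(adjoint (p₂ - p₁)) (φ i)‖ ^ 2
    ≤ ∑' i, ⟪(adjoint (p₁.comp A + B)) (φ i), (adjoint (p₂ - ps)) (φ i)⟫ := by
  have hAadj : adjoint A = A := hA.adjoint_eq
  set h : ι → U := fun i => (adjoint (p₁ - ps)) (φ i) with hh
  set k : ι → U := fun i => (adjoint (p₂ - ps)) (φ i) with hk
  -- rewrite p₁.comp A + B
  have hB : B = -(ps.comp A) := eq_neg_of_add_eq_zero_right heq
  have hcomp : p₁.comp A + B = (p₁ - ps).comp A := by
    rw [hB, ContinuousLinearMap.sub_comp]; abel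
  have hadj1 : ∀ i, (adjoint p₁) (φ i) - (adjoint ps) (φ i) = h i := by
    intro i; simp [hh, map_sub, ContinuousLinearMap.sub_apply]
  have hadj2 : ∀ i, (adjoint p₂) (φ i) - (adjoint ps) (φ i) = k i := by
    intro i; simp [hk, map_sub, ContinuousLinearMap.sub_apply]
  have hadj3 : ∀ i, (adjoint (p₂ - p₁)) (φ i) = k i - h i := by
    intro i
    have : p₂ - p₁ = (p₂ - ps) - (p₁ - ps) := by abel
    rw [this, map_sub, ContinuousLinearMap.sub_apply]
  -- symmetry of inner product with A
  have hsymm : ∀ x y : U, ⟪A x, y⟫ = ⟪A y, x⟫ := by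
    intro x y
    rw [← hAadj, ContinuousLinearMap.adjoint_inner_left, real_inner_comm, hAadj]
  -- summability facts
  have sq_bound : ∀ a b : U, ‖a - b‖ ^ 2 ≤ 2 * ‖a‖ ^ 2 + 2 * ‖b‖ ^ 2 := by
    intro a b
    have h1 : ‖a - b‖ ≤ ‖a‖ + ‖b‖ := norm_sub_le a b
    nlinarith [norm_nonneg (a - b), norm_nonneg a, norm_nonneg b, sq_nonneg (‖a‖ - ‖b‖)]
  have Sh : Summable fun i => ‖h i‖ ^ 2 := by
    apply Summable.of_nonneg_of_le (fun i => by positivity)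
      (fun i => ?_) (((hs1.mul_left 2).add (hs3.mul_left 2)))
    rw [← hadj1 i]; exact sq_bound _ _
  have Sk : Summable fun i => ‖k i‖ ^ 2 := by
    apply Summable.of_nonneg_of_le (fun i => by positivity)
      (fun i => ?_) (((hs2.mul_left 2).add (hs3.mul_left 2)))
    rw [← hadj2 i]; exact sq_bound _ _
  have Skh : Summable fun i => ‖k i - h i‖ ^ 2 := by
    apply Summable.of_nonneg_of_le (fun i => by positivity)
      (fun i => ?_) (((Sk.mul_left 2).add (Sh.mul_left 2)))
    exact sq_bound _ _
  -- pointwise key inequality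
  have key : ∀ i, γ / 2 * ‖k i‖ ^ 2 + γ / 2 * ‖h i‖ ^ 2 - L / 2 * ‖k i - h i‖ ^ 2
      ≤ ⟪A (h i), k i⟫ := by
    intro i
    have expand : ⟪A (k i - h i), k i - h i⟫
        = ⟪A (k i), k i⟫ - 2 * ⟪A (h i), k i⟫ + ⟪A (h i), h i⟫ := by
      rw [map_sub, inner_sub_left, inner_sub_right, inner_sub_right,
        hsymm (k i) (h i)]
      ring
    have l1 := hlow (h i)
    have l2 := hlow (k i)
    have l3 := hup (k i - h i)
    linarith
  -- summability of RHS
  have Sf : Summable fun i => ⟪A (h i), k i⟫ := by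
    apply Summable.of_norm_bounded
      (g := fun i => ‖A‖ / 2 * (‖h i‖ ^ 2 + ‖k i‖ ^ 2)) ((Sh.add Sk).mul_left (‖A‖ / 2))
    intro i
    have h1 : ‖⟪A (h i), k i⟫‖ ≤ ‖A (h i)‖ * ‖k i‖ := norm_inner_le_norm _ _
    have h2 : ‖A (h i)‖ ≤ ‖A‖ * ‖h i‖ := A.le_opNorm _
    have h3 : 0 ≤ ‖A‖ := norm_nonneg A
    nlinarith [norm_nonneg (h i), norm_nonneg (k i), sq_nonneg (‖h i‖ - ‖k i‖),
      mul_le_mul_of_nonneg_right h2 (norm_nonneg (k i))]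
  have Sg : Summable fun i => γ / 2 * ‖k i‖ ^ 2 + γ / 2 * ‖h i‖ ^ 2 - L / 2 * ‖k i - h i‖ ^ 2 :=
    ((Sk.mul_left _).add (Sh.mul_left _)).sub (Skh.mul_left _)
  have main := Summable.tsum_le_tsum key Sg Sf
  -- rewrite RHS of goal
  have hr : ∀ i, ⟪(adjoint (p₁.comp A + B)) (φ i), (adjoint (p₂ - ps)) (φ i)⟫
      = ⟪A (h i), k i⟫ := by
    intro i
    rw [hcomp, ContinuousLinearMap.adjoint_comp, hAadj]
    rfl
  have e3 : (∑' i, ‖(adjoint (p₂ - p₁)) (φ i)‖ ^ 2) = ∑' i, ‖k i - h i‖ ^ 2 :=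
    tsum_congr fun i => by rw [hadj3 i]
  rw [tsum_congr hr, e3]
  calc γ / 2 * ∑' i, ‖k i‖ ^ 2 + γ / 2 * ∑' i, ‖h i‖ ^ 2 - L / 2 * ∑' i, ‖k i - h i‖ ^ 2
      = ∑' i, (γ / 2 * ‖k i‖ ^ 2 + γ / 2 * ‖h i‖ ^ 2 - L / 2 * ‖k i - h i‖ ^ 2) := by
        rw [Summable.tsum_sub ((Sk.mul_left _).add (Sh.mul_left _)) (Skh.mul_left _),
          Summable.tsum_add (Sk.mul_left _) (Sh.mul_left _), tsum_mul_left, tsum_mul_left, tsum_mul_left]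
    _ ≤ ∑' i, ⟪A (h i), k i⟫ := main
end

section
/- Let U be a Hilbert space, F(·;α) ∈ C²(U), and suppose γ·Id ≤ ∇²_u F(ζ; α) ≤ L·Id for all ζ on the segment between u and S, where S satisfies ∇_u F(S; α) = 0. Let u⁺ := u − τ∇_u F(u; α) with 0 < τ ≤ 2κ/L, κ ∈ (0,1). Then ‖u⁺ − S‖ ≤ C_F⁻¹ ‖u − S‖ with C_F = √(1 + 2τγ(1−κ)), i.e., a single gradient step contracts the distance to the stationary point S by factor 1/√(1+2τγ(1−κ)). -/
open RealInnerProductSpace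

set_option maxHeartbeats 1000000 in
/-- A single gradient step contracts the distance to the stationary point. -/
theorem gradient_step_contraction {X : Type*}
    [NormedAddCommGroup X] [InnerProductSpace ℝ X] [CompleteSpace X]
    (F : X → ℝ) (g : X → X) (H : X → X →L[ℝ] X)
    (hg : ∀ ζ : X, HasGradientAt F (g ζ) ζ)
    (hH : ∀ ζ : X, HasFDerivAt g (H ζ) ζ)
    (γ L κ τ : ℝ) (hγ : 0 < γ) (hγL : γ ≤ L)
    (hκ0 : 0 < κ) (hκ1 : κ < 1) (hτ0 : 0 < τ) (hτ : τ ≤ 2 * κ / L)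
    (u S : X) (hS : g S = 0)
    (hbound : ∀ ζ ∈ segment ℝ u S, ∀ h : X,
        γ * ‖h‖ ^ 2 ≤ ⟪H ζ h, h⟫ ∧ ⟪H ζ h, h⟫ ≤ L * ‖h‖ ^ 2) :
    ‖(u - τ • g u) - S‖ ≤ (Real.sqrt (1 + 2 * τ * γ * (1 - κ)))⁻¹ * ‖u - S‖ := by
  have hL : 0 < L := lt_of_lt_of_le hγ hγL
  set e : X := u - S with he
  set w : X := τ • g u with hw
  set d : X := (u - τ • g u) - S with hd
  have hedw : e = d + w := by rw [he, hd, hw]; abel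
  -- Symmetry of the Hessian
  have hsym : ∀ ζ v v' : X, ⟪H ζ v, v'⟫ = ⟪H ζ v', v⟫ := by
    intro ζ v v'
    have hf : ∀ y : X, HasFDerivAt F ((innerSL ℝ) (g y)) y := by
      intro y
      have h1 := (hasGradientAt_iff_hasFDerivAt).1 (hg y)
      have : ((InnerProductSpace.toDual ℝ X) (g y) : X →L[ℝ] ℝ) = (innerSL ℝ) (g y) := by
        ext z; simp [InnerProductSpace.toDual_apply_apply]
      rwa [this] at h1
    have hf' : HasFDerivAt (fun y => (innerSL ℝ : X →L[ℝ] X →L[ℝ] ℝ) (g y))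
        ((innerSL ℝ : X →L[ℝ] X →L[ℝ] ℝ).comp (H ζ)) ζ :=
      ((innerSL ℝ : X →L[ℝ] X →L[ℝ] ℝ).hasFDerivAt).comp ζ (hH ζ)
    have := second_derivative_symmetric (f := F) (f' := fun y => (innerSL ℝ) (g y))
      (f'' := (innerSL ℝ : X →L[ℝ] X →L[ℝ] ℝ).comp (H ζ)) hf hf' v v'
    simpa using this
  -- Generalized Cauchy–Schwarz for the positive form of the Hessian
  have hcs : ∀ ζ ∈ segment ℝ u S, ∀ x y : X, ⟪H ζ x, y⟫ ^ 2 ≤ ⟪H ζ x, x⟫ * ⟪H ζ y, y⟫ := by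
    intro ζ hζ x y
    have hquad : ∀ t : ℝ,
        0 ≤ ⟪H ζ y, y⟫ * (t * t) + (2 * ⟪H ζ x, y⟫) * t + ⟪H ζ x, x⟫ := by
      intro t
      have h0 : (0:ℝ) ≤ γ * ‖x + t • y‖ ^ 2 := by positivity
      have h1 := (hbound ζ hζ (x + t • y)).1
      have hexp : ⟪H ζ (x + t • y), x + t • y⟫ =
          ⟪H ζ y, y⟫ * (t * t) + (2 * ⟪H ζ x, y⟫) * t + ⟪H ζ x, x⟫ := by
        simp only [map_add, map_smul, inner_add_left, inner_add_right,
          real_inner_smul_left, real_inner_smul_right, ContinuousLinearMap.coe_smul',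
          Pi.smul_apply, smul_eq_mul]
        linear_combination t * hsym ζ y x
      rw [← hexp]; exact h0.trans h1
    have := discrim_le_zero hquad
    rw [discrim] at this
    nlinarith [this]
  -- Pointwise lower bound for the derivative along the segment
  have hlow : ∀ ζ ∈ segment ℝ u S,
      γ * (1 - κ) * ‖d‖ ^ 2 - L / (4 * κ) * ‖w‖ ^ 2 ≤ ⟪H ζ e, d⟫ := by
    intro ζ hζ
    have h1 := (hbound ζ hζ d).1
    have h2 := (hbound ζ hζ w).2
    have h3 := (hbound ζ hζ w).1
    have hBdd0 : (0:ℝ) ≤ ⟪H ζ d, d⟫ := le_trans (by positivity) h1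
    have hcs1 := hcs ζ hζ w d
    have hcs' : ⟪H ζ w, d⟫ ^ 2 ≤ (L * ‖w‖ ^ 2) * ⟪H ζ d, d⟫ := by
      nlinarith [hcs1]
    have hsplit : ⟪H ζ e, d⟫ = ⟪H ζ d, d⟫ + ⟪H ζ w, d⟫ := by
      rw [hedw]; simp [map_add, inner_add_left]
    have hmn : (0:ℝ) ≤ 4 * κ ^ 2 * ⟪H ζ d, d⟫ + L * ‖w‖ ^ 2 := by
      nlinarith [hBdd0, sq_nonneg κ, sq_nonneg ‖w‖, hL.le]
    have habs2 : (4 * κ * |⟪H ζ w, d⟫|) ^ 2 ≤ (4 * κ ^ 2 * ⟪H ζ d, d⟫ + L * ‖w‖ ^ 2) ^ 2 := by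
      nlinarith [sq_abs (⟪H ζ w, d⟫), hcs', sq_nonneg (4 * κ ^ 2 * ⟪H ζ d, d⟫ - L * ‖w‖ ^ 2),
        mul_pos hκ0 hκ0]
    have habs : 4 * κ * |⟪H ζ w, d⟫| ≤ 4 * κ ^ 2 * ⟪H ζ d, d⟫ + L * ‖w‖ ^ 2 :=
      (pow_le_pow_iff_left₀ (by positivity) hmn two_ne_zero).1 habs2
    have h4κ : (0:ℝ) < 4 * κ := by linarith
    have hkey : 0 ≤ 4 * κ ^ 2 * ⟪H ζ d, d⟫ + 4 * κ * ⟪H ζ w, d⟫ + L * ‖w‖ ^ 2 := by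
      have hb := mul_le_mul_of_nonneg_left (neg_abs_le (⟪H ζ w, d⟫)) h4κ.le
      linarith [habs, hb]
    rw [hsplit, div_mul_eq_mul_div, sub_le_iff_le_add, ← sub_le_iff_le_add', le_div_iff₀ h4κ]
    nlinarith [hkey, h1, hκ0, hκ1,
      mul_le_mul_of_nonneg_left h1 (le_of_lt (mul_pos h4κ (by linarith : (0:ℝ) < 1 - κ)))]
  -- Mean value argument along the segment
  set φ : ℝ → ℝ := fun t => ⟪g (S + t • e), d⟫ with hφdef
  have hφ : ∀ t : ℝ, HasDerivAt φ ⟪H (S + t • e) e, d⟫ t := by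
    intro t
    have hline : HasDerivAt (fun t : ℝ => S + t • e) e t := by
      simpa using ((hasDerivAt_id t).smul_const e).const_add S
    have hgt : HasDerivAt (fun t : ℝ => g (S + t • e)) (H (S + t • e) e) t :=
      (hH (S + t • e)).comp_hasDerivAt t hline
    have := hgt.inner (𝕜 := ℝ) (hasDerivAt_const t d)
    rw [hφdef]
    simpa using this
  have hmem : ∀ t ∈ Set.Icc (0:ℝ) 1, S + t • e ∈ segment ℝ u S := by
    intro t ht
    refine ⟨t, 1 - t, ht.1, by linarith [ht.2], by ring, ?_⟩
    rw [he]; module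
  have hc : γ * (1 - κ) * ‖d‖ ^ 2 - L / (4 * κ) * ‖w‖ ^ 2 ≤ ⟪g u, d⟫ := by
    have hmvt := (convex_Icc (0:ℝ) 1).mul_sub_le_image_sub_of_le_deriv
      (f := φ) (C := γ * (1 - κ) * ‖d‖ ^ 2 - L / (4 * κ) * ‖w‖ ^ 2)
      (fun t _ => (hφ t).continuousAt.continuousWithinAt)
      (fun t _ => (hφ t).differentiableAt.differentiableWithinAt)
      (fun t ht => by
        rw [(hφ t).deriv]
        exact hlow _ (hmem t (interior_subset ht)))
      0 (by norm_num) 1 (by norm_num) (by norm_num)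
    have hφ0 : φ 0 = 0 := by simp [hφdef, hS]
    have hφ1 : φ 1 = ⟪g u, d⟫ := by
      have h1e : S + e = u := by rw [he]; abel
      simp [hφdef, h1e]
    rw [hφ0, hφ1, sub_zero, mul_one] at hmvt
    linarith [hmvt]
  -- Three-point identity and algebra
  have hwd : ⟪w, d⟫ = τ * ⟪g u, d⟫ := by rw [hw, real_inner_smul_left]
  have hid : ‖e‖ ^ 2 = ‖d‖ ^ 2 + 2 * ⟪d, w⟫ + ‖w‖ ^ 2 := by
    rw [hedw]; exact norm_add_sq_real d w
  have hτL : τ * L ≤ 2 * κ := by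
    have h := mul_le_mul_of_nonneg_right hτ hL.le
    rwa [div_mul_cancel₀ _ hL.ne'] at h
  have hhalf : τ * (L / (4 * κ)) ≤ 1 / 2 := by
    rw [mul_div_assoc', div_le_iff₀ (by positivity)]
    linarith
  have hsq : (1 + 2 * τ * γ * (1 - κ)) * ‖d‖ ^ 2 ≤ ‖e‖ ^ 2 := by
    have h5 : τ * (γ * (1 - κ) * ‖d‖ ^ 2 - L / (4 * κ) * ‖w‖ ^ 2) ≤ τ * ⟪g u, d⟫ :=
      mul_le_mul_of_nonneg_left hc hτ0.le
    have h6 : ⟪d, w⟫ = τ * ⟪g u, d⟫ := by rw [← hwd]; exact real_inner_comm w d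
    have h7 : τ * (L / (4 * κ)) * ‖w‖ ^ 2 ≤ (1 / 2) * ‖w‖ ^ 2 :=
      mul_le_mul_of_nonneg_right hhalf (by positivity)
    linarith [h5, h6, h7, hid]
  -- Conclude
  have ha : (0:ℝ) < 1 + 2 * τ * γ * (1 - κ) := by
    nlinarith [mul_pos (mul_pos hτ0 hγ) (show (0:ℝ) < 1 - κ by linarith)]
  have hsqrtpos : 0 < Real.sqrt (1 + 2 * τ * γ * (1 - κ)) := Real.sqrt_pos.2 ha
  have hrw : ‖d‖ * Real.sqrt (1 + 2 * τ * γ * (1 - κ))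
      = Real.sqrt (‖d‖ ^ 2 * (1 + 2 * τ * γ * (1 - κ))) := by
    rw [Real.sqrt_mul (by positivity : (0:ℝ) ≤ ‖d‖ ^ 2), Real.sqrt_sq (norm_nonneg _)]
  rw [inv_mul_eq_div, le_div_iff₀ hsqrtpos, hrw]
  calc Real.sqrt (‖d‖ ^ 2 * (1 + 2 * τ * γ * (1 - κ)))
      ≤ Real.sqrt (‖e‖ ^ 2) := Real.sqrt_le_sqrt (by nlinarith [hsq])
    _ = ‖e‖ := Real.sqrt_sq (norm_nonneg _)
end

section
/- Let 𝒜 be a Hilbert space, R : 𝒜 → ℝ ∪ {∞} proper convex lower semicontinuous, σ > 0, q, q̂ ∈ 𝒜, and α, α̂ ∈ 𝒜 with α̂ = prox_{σR}(α̂ − σq̂). Suppose R is prox-σ-contractive at α̂ for q̂ within a set A ∋ α with constant C_R, i.e., ‖D(α) − D(α̂)‖ ≤ σC_R‖α − α̂‖ where D(β) := prox_{σR}(β − σq̂) − β. Then for α⁺ := prox_{σR}(α − σq): ‖α⁺ − α‖ ≤ σ‖q − q̂‖ + σC_R‖α − α̂‖. -/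
/-!
Writing `α⁺ - α = (prox (α - σ q) - prox (α - σ q̂)) + (prox (α - σ q̂) - α)`, the second bracket
is `D α - D α̂` because `D α̂ = 0` at the fixed point `α̂`, so it is controlled by prox-σ-contractivity.
The first bracket is at most `σ ‖q - q̂‖` because the proximal map of a proper convex function is
nonexpansive: comparing the prox objective at `prox x` with its value along the segment towards
any `y` gives the subgradient inequality `⟪x - prox x, y - prox x⟫ ≤ σ (R y - R (prox x))`, and
adding two of these yields firm nonexpansiveness.
-/

open Filter Topology RealInnerProductSpace

lemma nonpos_of_forall_le_mul {s K : ℝ} (h : ∀ t : ℝ, 0 < t → t ≤ 1 → s ≤ t * K) : s ≤ 0 := by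
  have hlim : Tendsto (fun t : ℝ => t * K) (𝓝[>] 0) (𝓝 0) := by
    simpa using ((continuous_mul_const K).tendsto 0).mono_left nhdsWithin_le_nhds
  refine ge_of_tendsto hlim ?_
  filter_upwards [self_mem_nhdsWithin, Ioc_mem_nhdsGT zero_lt_one] with t ht ht₁
  exact h t ht ht₁.2

section Convex

variable {E : Type*} [AddCommGroup E] [Module ℝ E]

def IsConvexEReal (R : E → EReal) : Prop :=
  ∀ x y : E, ∀ t : ℝ, 0 ≤ t → t ≤ 1 →
    R (t • x + (1 - t) • y) ≤ (t : EReal) * R x + ((1 - t : ℝ) : EReal) * R y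

lemma IsConvexEReal.le_coe_toReal {R : E → EReal} (hconv : IsConvexEReal R)
    (hbot : ∀ z, R z ≠ ⊥) {x y : E} (hx : R x ≠ ⊤) (hy : R y ≠ ⊤) {t : ℝ} (ht₀ : 0 ≤ t)
    (ht₁ : t ≤ 1) :
    R (t • x + (1 - t) • y) ≤ ((t * (R x).toReal + (1 - t) * (R y).toReal : ℝ) : EReal) := by
  have h := hconv x y t ht₀ ht₁
  rwa [← EReal.coe_toReal hx (hbot x), ← EReal.coe_toReal hy (hbot y)] at h

end Convex

section Prox

variable {E : Type*} [SeminormedAddCommGroup E] {R : E → EReal} {σ : ℝ} {prox : E → E}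

def IsProxMap (σ : ℝ) (R : E → EReal) (prox : E → E) : Prop :=
  ∀ x z : E, ((1 / 2 * ‖prox x - x‖ ^ 2 : ℝ) : EReal) + (σ : EReal) * R (prox x)
    ≤ ((1 / 2 * ‖z - x‖ ^ 2 : ℝ) : EReal) + (σ : EReal) * R z

lemma IsProxMap.ne_top (hprox : IsProxMap σ R prox) (hσ : 0 < σ) (htop : ∃ z, R z ≠ ⊤)
    (x : E) : R (prox x) ≠ ⊤ := by
  obtain ⟨z, hz⟩ := htop
  intro hx
  have h := hprox x z
  rw [hx, EReal.mul_top_of_pos (mod_cast hσ), EReal.coe_add_top] at h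
  refine (EReal.add_lt_top (EReal.coe_ne_top _) ?_).ne (top_le_iff.mp h)
  exact (EReal.mul_ne_top _ _).2 ⟨.inl (EReal.coe_ne_bot _), .inl (mod_cast hσ.le),
    .inl (EReal.coe_ne_top _), .inr hz⟩

lemma IsProxMap.objective_le (hprox : IsProxMap σ R prox) (hσ : 0 < σ) (htop : ∃ z, R z ≠ ⊤)
    (hbot : ∀ z, R z ≠ ⊥) (x z : E) {c : ℝ} (hz : R z ≤ c) :
    1 / 2 * ‖prox x - x‖ ^ 2 + σ * (R (prox x)).toReal ≤ 1 / 2 * ‖z - x‖ ^ 2 + σ * c := by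
  have h := (hprox x z).trans
    (add_le_add_right (mul_le_mul_of_nonneg_left hz (mod_cast hσ.le)) _)
  rw [← EReal.coe_toReal (hprox.ne_top hσ htop x) (hbot _)] at h
  exact_mod_cast h

end Prox

section ProxInner

variable {E : Type*} [SeminormedAddCommGroup E] [InnerProductSpace ℝ E]
  {R : E → EReal} {σ : ℝ} {prox : E → E}

/-- The optimality condition `(x - prox x) / σ ∈ ∂R (prox x)`. -/
lemma IsProxMap.inner_le (hprox : IsProxMap σ R prox) (hσ : 0 < σ) (htop : ∃ z, R z ≠ ⊤)
    (hbot : ∀ z, R z ≠ ⊥) (hconv : IsConvexEReal R) (x y : E) (hy : R y ≠ ⊤) :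
    ⟪x - prox x, y - prox x⟫ ≤ σ * ((R y).toReal - (R (prox x)).toReal) := by
  set p := prox x
  suffices ⟪x - p, y - p⟫ - σ * ((R y).toReal - (R p).toReal) ≤ 0 by linarith
  refine nonpos_of_forall_le_mul (K := 1 / 2 * ‖y - p‖ ^ 2) fun t ht ht₁ => ?_
  have hmin := hprox.objective_le hσ htop hbot x (t • y + (1 - t) • p)
    (hconv.le_coe_toReal hbot hy (hprox.ne_top hσ htop x) ht.le ht₁)
  have hsq : ‖t • y + (1 - t) • p - x‖ ^ 2
      = ‖p - x‖ ^ 2 - 2 * t * ⟪x - p, y - p⟫ + t ^ 2 * ‖y - p‖ ^ 2 := by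
    have hseg : t • y + (1 - t) • p - x = (p - x) + t • (y - p) := by module
    have hneg : ⟪p - x, y - p⟫ = -⟪x - p, y - p⟫ := by rw [← inner_neg_left, neg_sub]
    rw [hseg, norm_add_sq_real, inner_smul_right, norm_smul, Real.norm_of_nonneg ht.le, mul_pow,
      hneg]
    ring
  rw [hsq] at hmin
  nlinarith

lemma IsProxMap.norm_sub_sq_le_inner (hprox : IsProxMap σ R prox) (hσ : 0 < σ)
    (htop : ∃ z, R z ≠ ⊤) (hbot : ∀ z, R z ≠ ⊥) (hconv : IsConvexEReal R) (x y : E) :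
    ‖prox x - prox y‖ ^ 2 ≤ ⟪prox x - prox y, x - y⟫ := by
  have hx := hprox.inner_le hσ htop hbot hconv x (prox y) (hprox.ne_top hσ htop y)
  have hy := hprox.inner_le hσ htop hbot hconv y (prox x) (hprox.ne_top hσ htop x)
  have hsum : ⟪x - prox x, prox y - prox x⟫ + ⟪y - prox y, prox x - prox y⟫
      = ‖prox x - prox y‖ ^ 2 - ⟪prox x - prox y, x - y⟫ := by
    rw [← real_inner_self_eq_norm_sq]
    simp only [inner_sub_left, inner_sub_right, real_inner_comm]
    ring
  linarith

lemma IsProxMap.norm_sub_le (hprox : IsProxMap σ R prox) (hσ : 0 < σ) (htop : ∃ z, R z ≠ ⊤)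
    (hbot : ∀ z, R z ≠ ⊥) (hconv : IsConvexEReal R) (x y : E) :
    ‖prox x - prox y‖ ≤ ‖x - y‖ := by
  have h := (hprox.norm_sub_sq_le_inner hσ htop hbot hconv x y).trans (real_inner_le_norm _ _)
  nlinarith [norm_nonneg (prox x - prox y), norm_nonneg (x - y)]

end ProxInner

theorem prox_step_bound_general {𝒜 : Type*}
    [NormedAddCommGroup 𝒜] [InnerProductSpace ℝ 𝒜]
    (R : 𝒜 → EReal) (σ C_R : ℝ) (hσ : 0 < σ)
    (hproper_top : ∃ z, R z ≠ ⊤) (hproper_bot : ∀ z, R z ≠ ⊥)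
    (hconv : ∀ x y : 𝒜, ∀ t : ℝ, 0 ≤ t → t ≤ 1 →
        R (t • x + (1 - t) • y) ≤ (t : EReal) * R x + ((1 - t : ℝ) : EReal) * R y)
    (prox : 𝒜 → 𝒜)
    (hprox : ∀ x z : 𝒜,
        ((1 / 2 * ‖prox x - x‖ ^ 2 : ℝ) : EReal) + (σ : EReal) * R (prox x)
          ≤ ((1 / 2 * ‖z - x‖ ^ 2 : ℝ) : EReal) + (σ : EReal) * R z)
    (q qs α αs : 𝒜) (A : Set 𝒜) (hαA : α ∈ A)
    (hfix : αs = prox (αs - σ • qs))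
    (hcontr : ∀ β ∈ A,
        ‖(prox (β - σ • qs) - β) - (prox (αs - σ • qs) - αs)‖ ≤ σ * C_R * ‖β - αs‖) :
    ‖prox (α - σ • q) - α‖ ≤ σ * ‖q - qs‖ + σ * C_R * ‖α - αs‖ := by
  have hnonexp : ‖prox (α - σ • q) - prox (α - σ • qs)‖ ≤ σ * ‖q - qs‖ := by
    simpa [← smul_sub, norm_smul, abs_of_pos hσ, norm_sub_rev] using
      IsProxMap.norm_sub_le hprox hσ hproper_top hproper_bot hconv (α - σ • q) (α - σ • qs)
  have hdrift : ‖prox (α - σ • qs) - α‖ ≤ σ * C_R * ‖α - αs‖ := by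
    simpa [← hfix] using hcontr α hαA
  calc ‖prox (α - σ • q) - α‖
      ≤ ‖prox (α - σ • q) - prox (α - σ • qs)‖ + ‖prox (α - σ • qs) - α‖ :=
        norm_sub_le_norm_sub_add_norm_sub _ _ _
    _ ≤ σ * ‖q - qs‖ + σ * C_R * ‖α - αs‖ := add_le_add hnonexp hdrift

/-- Step bound for the proximal update under prox-σ-contractivity. -/
theorem prox_step_bound {𝒜 : Type*}
    [NormedAddCommGroup 𝒜] [InnerProductSpace ℝ 𝒜] [CompleteSpace 𝒜]
    (R : 𝒜 → EReal) (σ C_R : ℝ) (hσ : 0 < σ) (hCR : 0 ≤ C_R)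
    (hproper_top : ∃ z, R z ≠ ⊤) (hproper_bot : ∀ z, R z ≠ ⊥)
    (hconv : ∀ x y : 𝒜, ∀ t : ℝ, 0 ≤ t → t ≤ 1 →
        R (t • x + (1 - t) • y) ≤ (t : EReal) * R x + ((1 - t : ℝ) : EReal) * R y)
    (hlsc : LowerSemicontinuous R)
    (prox : 𝒜 → 𝒜)
    (hprox : ∀ x z : 𝒜,
        ((1 / 2 * ‖prox x - x‖ ^ 2 : ℝ) : EReal) + (σ : EReal) * R (prox x)
          ≤ ((1 / 2 * ‖z - x‖ ^ 2 : ℝ) : EReal) + (σ : EReal) * R z)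
    (q qs α αs : 𝒜) (A : Set 𝒜) (hαA : α ∈ A)
    (hfix : αs = prox (αs - σ • qs))
    (hcontr : ∀ β ∈ A,
        ‖(prox (β - σ • qs) - β) - (prox (αs - σ • qs) - αs)‖ ≤ σ * C_R * ‖β - αs‖) :
    ‖prox (α - σ • q) - α‖ ≤ σ * ‖q - qs‖ + σ * C_R * ‖α - αs‖ :=
  prox_step_bound_general R σ C_R hσ hproper_top hproper_bot hconv prox hprox q qs α αs A hαA hfix
    hcontr
end
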